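/- Let ξ_1, ξ_2, … be i.i.d. real random variables, symmetric about 0, with P(|ξ_1| > t) = 1/(1 + t^γ) for all t ≥ 0, where γ > 1. Fix μ > 0, let S_0 = 0 and S_j = Σ_{i=1}^j (ξ_i + μ), and for a fixed n and each 0 ≤ j ≤ n let B_j be the event that S_j < S_i for all 0 ≤ i ≤ n with i ≠ j (the n-step walk attains its strict minimum at j). Set p* = P(S_i > 0 for all i ≥ 1), c₁ = 1/(2(1 + μ^{−γ})(1 + μ)^γ), c₂ = inf_{x ≥ 1}(x/(1+x))^{x−1}, and k₀ = max(1, ⌈μ^{−γ/(γ−1)}⌉). Then for every integer k with k₀ ≤ k ≤ n − 1: Σ_{j=k+1}^n P(B_j) ≥ (c₁c₂p*/γ) · ( (k+1)^{−γ} − (n+1)^{−γ} ). -/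

import Mathlib

open MeasureTheory ProbabilityTheory
open scoped ENNReal

/-- The constant `c₁ = 1/(2(1 + μ^{−γ})(1 + μ)^γ)`. -/
noncomputable def cOne (γ μ : ℝ) : ℝ := 1 / (2 * (1 + μ ^ (-γ)) * (1 + μ) ^ γ)

/-- The constant `c₂ = inf_{x ≥ 1} (x/(1+x))^{x−1}`. -/
noncomputable def cTwo : ℝ := ⨅ x : {x : ℝ // 1 ≤ x}, ((x : ℝ) / (1 + (x : ℝ))) ^ ((x : ℝ) - 1)

/-- The threshold `k₀ = max(1, ⌈μ^{−γ/(γ−1)}⌉)`. -/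
noncomputable def kZero (γ μ : ℝ) : ℤ := max 1 ⌈μ ^ (-γ / (γ - 1))⌉

/-- The positively drifted random walk `S_j = Σ_{i=1}^j (ξ_i + μ)`. -/
noncomputable def walk {Ω : Type*} (ξ : ℕ → Ω → ℝ) (μ : ℝ) (j : ℕ) (ω : Ω) : ℝ :=
  ∑ i ∈ Finset.range j, (ξ i ω + μ)

section Helpers

lemma bern {γ y : ℝ} (hγ : 0 ≤ γ) (hy : 0 ≤ y) : 1 - γ * y ≤ (1 + y) ^ (-γ) := by
  have h1 : (0:ℝ) < 1 + y := by linarith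
  have hlog : Real.log (1 + y) ≤ y := by
    have := Real.log_le_sub_one_of_pos h1
    linarith
  have h2 : (1 + y) ^ (-γ) = Real.exp (-γ * Real.log (1 + y)) := by
    rw [Real.rpow_def_of_pos h1]; ring_nf
  rw [h2]
  have h3 := Real.add_one_le_exp (-γ * Real.log (1 + y))
  nlinarith [mul_le_mul_of_nonneg_left hlog hγ]

lemma step_ineq {γ x : ℝ} (hγ : 1 < γ) (hx : 1 ≤ x) :
    x ^ (-γ) - (x + 1) ^ (-γ) ≤ γ / x ^ (γ + 1) := by
  have hx0 : (0:ℝ) < x := by linarith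
  have hb := bern (γ := γ) (y := 1/x) (by linarith) (by positivity)
  have hfac : (x + 1) ^ (-γ) = x ^ (-γ) * (1 + 1/x) ^ (-γ) := by
    rw [← Real.mul_rpow (le_of_lt hx0) (by positivity)]
    congr 1
    field_simp
  have hxg : (0:ℝ) < x ^ (-γ) := Real.rpow_pos_of_pos hx0 _
  have key : x ^ (-γ) - (x + 1) ^ (-γ) ≤ x ^ (-γ) * (γ * (1/x)) := by
    rw [hfac]
    nlinarith [mul_le_mul_of_nonneg_left hb (le_of_lt hxg)]
  refine key.trans (le_of_eq ?_)
  rw [Real.rpow_add hx0, Real.rpow_one, Real.rpow_neg (le_of_lt hx0)]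
  field_simp

lemma cTwo_nonneg : 0 ≤ cTwo := by
  apply le_ciInf
  intro x
  apply Real.rpow_nonneg
  have := x.2
  positivity

lemma cTwo_le {j : ℕ} (hj : 1 ≤ j) : cTwo ≤ ((j:ℝ) / (1 + (j:ℝ))) ^ (j - 1) := by
  have h1 : (1:ℝ) ≤ (j:ℝ) := by exact_mod_cast hj
  have hb : BddBelow (Set.range fun x : {x : ℝ // 1 ≤ x} =>
      ((x : ℝ) / (1 + (x : ℝ))) ^ ((x : ℝ) - 1) ) := by
    refine ⟨0, fun y hy => ?_⟩
    obtain ⟨x, rfl⟩ := hy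
    apply Real.rpow_nonneg
    have := x.2
    positivity
  have := ciInf_le hb (⟨(j:ℝ), h1⟩ : {x : ℝ // 1 ≤ x})
  refine this.trans (le_of_eq ?_)
  rw [show ((j:ℝ) - 1) = ((j - 1 : ℕ) : ℝ) by push_cast [hj]; ring, Real.rpow_natCast]

lemma cOne_pos {γ μ : ℝ} (hμ : 0 < μ) : 0 < cOne γ μ := by
  unfold cOne
  have h1 : (0:ℝ) < μ ^ (-γ) := Real.rpow_pos_of_pos hμ _
  have h2 : (0:ℝ) < (1 + μ) ^ γ := Real.rpow_pos_of_pos (by linarith) _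
  positivity

lemma tail_lb {γ μ : ℝ} (hγ : 1 < γ) (hμ : 0 < μ) {j : ℕ} (hj : 1 ≤ j) :
    cOne γ μ / (j:ℝ) ^ (γ + 1) ≤
      1 / (2 * (1 + (((j:ℝ) - 1) * ((j:ℝ) ^ γ⁻¹ + μ) + μ) ^ γ)) := by
  have hγ0 : (0:ℝ) < γ := by linarith
  have hJ : (1:ℝ) ≤ (j:ℝ) := by exact_mod_cast hj
  have hJ0 : (0:ℝ) < (j:ℝ) := by linarith
  set J := (j:ℝ)
  set M := J ^ γ⁻¹ with hM
  have hM1 : 1 ≤ M := Real.one_le_rpow hJ (by positivity)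
  have hMγ : M ^ γ = J := by
    rw [hM, ← Real.rpow_mul (le_of_lt hJ0), inv_mul_cancel₀ (ne_of_gt hγ0), Real.rpow_one]
  set t := (J - 1) * (M + μ) + μ with ht
  have ht0 : μ ≤ t := by rw [ht]; nlinarith
  have htub : t ≤ J * M * (1 + μ) := by
    rw [ht]; nlinarith [mul_le_mul_of_nonneg_left hM1 (mul_nonneg (le_of_lt hJ0) (le_of_lt hμ))]
  have htγ : t ^ γ ≤ J ^ (γ + 1) * (1 + μ) ^ γ := by
    calc t ^ γ ≤ (J * M * (1 + μ)) ^ γ :=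
          Real.rpow_le_rpow (by linarith) htub (le_of_lt hγ0)
      _ = J ^ γ * M ^ γ * (1 + μ) ^ γ := by
          rw [Real.mul_rpow (by positivity) (by positivity),
            Real.mul_rpow (by positivity) (by positivity)]
      _ = J ^ (γ + 1) * (1 + μ) ^ γ := by
          rw [hMγ, Real.rpow_add hJ0, Real.rpow_one]
  have h1t : 1 ≤ μ ^ (-γ) * t ^ γ := by
    have : (1:ℝ) ≤ (t / μ) ^ γ := Real.one_le_rpow (by rw [le_div_iff₀ hμ]; linarith) (le_of_lt hγ0)
    rw [Real.div_rpow (by linarith) (le_of_lt hμ)] at this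
    rwa [Real.rpow_neg (le_of_lt hμ), inv_mul_eq_div]
  have hden : 1 + t ^ γ ≤ (1 + μ ^ (-γ)) * ((1 + μ) ^ γ * J ^ (γ + 1)) := by
    have hμγ : (0:ℝ) < μ ^ (-γ) := Real.rpow_pos_of_pos hμ _
    have htγ0 : (0:ℝ) ≤ t ^ γ := Real.rpow_nonneg (by linarith) _
    nlinarith
  rw [cOne, div_div]
  exact one_div_le_one_div_of_le
    (by nlinarith [Real.rpow_nonneg (le_trans (le_of_lt hμ) ht0) γ]) (by nlinarith [hden])

section ProbHelpers
variable {Ω : Type*} [MeasurableSpace Ω] (P : Measure Ω) [IsProbabilityMeasure P]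
    (ξ : ℕ → Ω → ℝ) (γ : ℝ)

lemma prob_lt_neg (hmeas : ∀ i, Measurable (ξ i))
    (hsym : P.map (ξ 0) = P.map (fun ω => -ξ 0 ω))
    (hγ : 1 < γ)
    (htail : ∀ t : ℝ, 0 ≤ t → P {ω | t < |ξ 0 ω|} = ENNReal.ofReal (1 / (1 + t ^ γ)))
    {t : ℝ} (ht : 0 ≤ t) :
    P {ω | ξ 0 ω < -t} = ENNReal.ofReal (1 / (2 * (1 + t ^ γ))) := by
  have hAB : P {ω | ξ 0 ω < -t} = P {ω | t < ξ 0 ω} := by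
    have h1 : P {ω | ξ 0 ω < -t} = P.map (ξ 0) (Set.Iio (-t)) := by
      rw [Measure.map_apply (hmeas 0) measurableSet_Iio]; rfl
    have h2 : P.map (fun ω => -ξ 0 ω) (Set.Iio (-t)) = P {ω | t < ξ 0 ω} := by
      rw [Measure.map_apply (f := fun ω => -ξ 0 ω) (hmeas 0).neg measurableSet_Iio]
      congr 1
      ext ω
      simp only [Set.mem_preimage, Set.mem_setOf_eq, Set.mem_Iio, neg_lt_neg_iff]
    rw [h1, hsym, h2]
  have hsplit : {ω : Ω | t < |ξ 0 ω|} = {ω | ξ 0 ω < -t} ∪ {ω | t < ξ 0 ω} := by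
    ext ω
    simp only [Set.mem_setOf_eq, Set.mem_union, lt_abs, lt_neg]
    tauto
  have hdisj : Disjoint {ω | ξ 0 ω < -t} {ω | t < ξ 0 ω} := by
    rw [Set.disjoint_left]
    intro ω h1 h2
    simp only [Set.mem_setOf_eq] at h1 h2
    linarith
  have hmB : MeasurableSet {ω | t < ξ 0 ω} := measurableSet_lt measurable_const (hmeas 0)
  have hsum : P {ω : Ω | t < |ξ 0 ω|} = P {ω | ξ 0 ω < -t} + P {ω | t < ξ 0 ω} := by
    rw [hsplit, measure_union hdisj hmB]
  rw [htail t ht, hAB] at hsum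
  have h2ne : (2 : ℝ≥0∞) ≠ 0 := by norm_num
  have h2top : (2 : ℝ≥0∞) ≠ ⊤ := by norm_num
  have htγ : (0:ℝ) ≤ t ^ γ := Real.rpow_nonneg ht _
  rw [hAB]
  have : (2 : ℝ≥0∞) * P {ω | t < ξ 0 ω} = ENNReal.ofReal (1 / (1 + t ^ γ)) := by
    rw [two_mul, ← hsum]
  have h4 : P {ω | t < ξ 0 ω} = ENNReal.ofReal (1 / (1 + t ^ γ)) / 2 := by
    rw [ENNReal.eq_div_iff h2ne h2top, ← this]
  rw [h4, ← ENNReal.ofReal_ofNat 2, ← ENNReal.ofReal_div_of_pos (by norm_num)]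
  congr 1
  rw [div_div]
  ring_nf

lemma prob_abs_le (hmeas : ∀ i, Measurable (ξ i)) (hγ : 1 < γ)
    (htail : ∀ t : ℝ, 0 ≤ t → P {ω | t < |ξ 0 ω|} = ENNReal.ofReal (1 / (1 + t ^ γ)))
    {M : ℝ} (hM : 0 ≤ M) :
    P {ω | |ξ 0 ω| ≤ M} = ENNReal.ofReal (1 - 1 / (1 + M ^ γ)) := by
  have hc : {ω : Ω | |ξ 0 ω| ≤ M} = {ω | M < |ξ 0 ω|}ᶜ := by
    ext ω; simp [not_lt]
  have hmA : MeasurableSet {ω | M < |ξ 0 ω|} :=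
    measurableSet_lt measurable_const (hmeas 0).abs
  rw [hc, prob_compl_eq_one_sub hmA, htail M hM, ← ENNReal.ofReal_one,
    ← ENNReal.ofReal_sub _ (by positivity)]

lemma map_tuple (hmeas : ∀ i, Measurable (ξ i))
    (hindep : iIndepFun ξ P)
    (hident : ∀ i, P.map (ξ i) = P.map (ξ 0)) (j r : ℕ) :
    P.map (fun ω (i : Fin r) => ξ (j + i) ω) = Measure.pi (fun _ : Fin r => P.map (ξ 0)) := by
  haveI : IsProbabilityMeasure (P.map (ξ 0)) := Measure.isProbabilityMeasure_map (hmeas 0).aemeasurable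
  refine (Measure.pi_eq fun s hs => ?_).symm
  have hg : Measurable (fun ω (i : Fin r) => ξ (j + i) ω) :=
    measurable_pi_lambda _ fun i => hmeas _
  rw [Measure.map_apply hg (MeasurableSet.univ_pi hs)]
  set sets : ℕ → Set ℝ := fun l => if h : l - j < r ∧ j ≤ l then s ⟨l - j, h.1⟩ else Set.univ
    with hsets
  have hmsets : ∀ l, MeasurableSet (sets l) := by
    intro l
    rw [hsets]
    dsimp only
    split_ifs with h
    · exact hs _
    · exact MeasurableSet.univ
  have hset : (fun ω (i : Fin r) => ξ (j + i) ω) ⁻¹' Set.pi Set.univ s =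
      ⋂ l ∈ Finset.Ico j (j + r), ξ l ⁻¹' sets l := by
    ext ω
    simp only [Set.mem_preimage, Set.mem_pi, Set.mem_univ, forall_true_left, Set.mem_iInter,
      Finset.mem_Ico, hsets]
    constructor
    · rintro h l ⟨hl1, hl2⟩
      have h1 : l - j < r ∧ j ≤ l := ⟨by omega, hl1⟩
      rw [dif_pos h1]
      have := h ⟨l - j, h1.1⟩
      simpa [Nat.add_sub_cancel' hl1] using this
    · intro h i
      have h1 := h (j + i) ⟨by omega, by omega⟩
      have h2 : (j + (i : ℕ)) - j < r ∧ j ≤ j + (i : ℕ) := ⟨by omega, by omega⟩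
      rw [dif_pos h2] at h1
      convert h1 using 2
      ext
      simp
  rw [hset, hindep.measure_inter_preimage_eq_mul _ (fun l _ => hmsets l)]
  have hfac : ∀ l, P (ξ l ⁻¹' sets l) = (P.map (ξ 0)) (sets l) := fun l => by
    rw [← hident l, Measure.map_apply (hmeas l) (hmsets l)]
  calc ∏ l ∈ Finset.Ico j (j + r), P (ξ l ⁻¹' sets l)
      = ∏ l ∈ Finset.Ico j (j + r), (P.map (ξ 0)) (sets l) :=
        Finset.prod_congr rfl fun l _ => hfac l
    _ = ∏ i ∈ Finset.range r, (P.map (ξ 0)) (sets (j + i)) := by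
        rw [Finset.prod_Ico_eq_prod_range]
        simp
    _ = ∏ i : Fin r, (P.map (ξ 0)) (sets (j + (i : ℕ))) :=
        (Fin.prod_univ_eq_prod_range (fun i => (P.map (ξ 0)) (sets (j + i))) r).symm
    _ = ∏ i : Fin r, (P.map (ξ 0)) (s i) := by
        refine Finset.prod_congr rfl fun i _ => ?_
        congr 1
        rw [hsets]
        have h2 : (j + (i : ℕ)) - j < r ∧ j ≤ j + (i : ℕ) := ⟨by omega, by omega⟩
        dsimp only
        have h3 : (⟨(j + (i : ℕ)) - j, h2.1⟩ : Fin r) = i := by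
          ext; simp
        rw [dif_pos h2, h3]

lemma prob_tuple_shift (hmeas : ∀ i, Measurable (ξ i))
    (hindep : iIndepFun ξ P)
    (hident : ∀ i, P.map (ξ i) = P.map (ξ 0)) (j r : ℕ)
    {A : Set (Fin r → ℝ)} (hA : MeasurableSet A) :
    P ((fun ω (i : Fin r) => ξ (j + i) ω) ⁻¹' A) =
      P ((fun ω (i : Fin r) => ξ i ω) ⁻¹' A) := by
  have hg : Measurable (fun ω (i : Fin r) => ξ (j + i) ω) :=
    measurable_pi_lambda _ fun i => hmeas _
  have hg0 : Measurable (fun ω (i : Fin r) => ξ i ω) :=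
    measurable_pi_lambda _ fun i => hmeas _
  rw [← Measure.map_apply hg hA, ← Measure.map_apply hg0 hA,
    map_tuple P ξ hmeas hindep hident j r]
  have := map_tuple P ξ hmeas hindep hident 0 r
  simp only [Nat.zero_add] at this
  rw [this]

lemma perj (hmeas : ∀ i, Measurable (ξ i))
    (hindep : iIndepFun ξ P)
    (hident : ∀ i, P.map (ξ i) = P.map (ξ 0))
    (hsym : P.map (ξ 0) = P.map (fun ω => -ξ 0 ω))
    (hγ : 1 < γ)
    (htail : ∀ t : ℝ, 0 ≤ t → P {ω | t < |ξ 0 ω|} = ENNReal.ofReal (1 / (1 + t ^ γ)))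
    {μ : ℝ} (hμ : 0 < μ)
    {pstar : ℝ} (hpstar : pstar = (P {ω | ∀ i : ℕ, 1 ≤ i → 0 < walk ξ μ i ω}).toReal)
    {n j : ℕ} (hj1 : 1 ≤ j) (hjn : j ≤ n) :
    cOne γ μ * cTwo * pstar / (j:ℝ) ^ (γ + 1) ≤
      (P {ω | ∀ i, i ≤ n → i ≠ j → walk ξ μ j ω < walk ξ μ i ω}).toReal := by
  have hγ0 : (0:ℝ) < γ := by linarith
  have hJ : (1:ℝ) ≤ (j:ℝ) := by exact_mod_cast hj1
  have hJ0 : (0:ℝ) < (j:ℝ) := by linarith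
  set J : ℝ := (j:ℝ) with hJdef
  set M : ℝ := J ^ γ⁻¹ with hMdef
  have hM1 : 1 ≤ M := Real.one_le_rpow hJ (by positivity)
  have hM0 : 0 ≤ M := by linarith
  have hMγ : M ^ γ = J := by
    rw [hMdef, ← Real.rpow_mul (le_of_lt hJ0), inv_mul_cancel₀ (ne_of_gt hγ0), Real.rpow_one]
  set t : ℝ := (J - 1) * (M + μ) + μ with htdef
  have ht0 : 0 ≤ t := by nlinarith
  set r : ℕ := n - j with hrdef
  -- the sets
  set A : ℕ → Set ℝ := fun i => if i = j - 1 then Set.Iio (-t) else {x : ℝ | |x| ≤ M} with hAdef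
  have hAm : ∀ i, MeasurableSet (A i) := by
    intro i
    rw [hAdef]
    dsimp only
    split_ifs
    · exact measurableSet_Iio
    · exact measurableSet_le (measurable_abs) measurable_const
  set D : Set Ω := ⋂ i ∈ Finset.range j, ξ i ⁻¹' A i with hDdef
  set AT : Set (Fin r → ℝ) := ⋂ m ∈ Set.Icc 1 r, {f : Fin r → ℝ |
      0 < ∑ l ∈ Finset.range m, ((if h : l < r then f ⟨l, h⟩ else 0) + μ)} with hATdef
  have hATm : MeasurableSet AT := by
    rw [hATdef]
    refine MeasurableSet.biInter (Set.to_countable _) fun m _ => ?_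
    refine measurableSet_lt measurable_const ?_
    refine Finset.measurable_sum _ fun l _ => ?_
    refine Measurable.add ?_ measurable_const
    split_ifs with h
    · exact measurable_pi_apply _
    · exact measurable_const
  set E : Set Ω := (fun ω (i : Fin r) => ξ (j + i) ω) ⁻¹' AT with hEdef
  -- inclusion
  have hsub : D ∩ E ⊆ {ω | ∀ i, i ≤ n → i ≠ j → walk ξ μ j ω < walk ξ μ i ω} := by
    rintro ω ⟨hD, hE⟩
    rw [hDdef, Set.mem_iInter₂] at hD
    simp only [Finset.mem_range, Set.mem_preimage] at hD
    rw [hEdef, Set.mem_preimage, hATdef, Set.mem_iInter₂] at hE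
    have hE' : ∀ m, 1 ≤ m → m ≤ r → 0 < ∑ l ∈ Finset.range m, (ξ (j + l) ω + μ) := by
      intro m hm1 hm2
      have := hE m ⟨hm1, hm2⟩
      simp only [Set.mem_setOf_eq] at this
      convert this using 1
      refine Finset.sum_congr rfl fun l hl => ?_
      rw [Finset.mem_range] at hl
      rw [dif_pos (by omega)]
    have hbig : ξ (j - 1) ω < -t := by
      have := hD (j - 1) (by omega)
      rw [hAdef] at this
      simpa using this
    have hsmall : ∀ i, i < j - 1 → |ξ i ω| ≤ M := by
      intro i hi
      have := hD i (by omega)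
      rw [hAdef] at this
      simp only [if_neg (by omega : ¬ i = j - 1)] at this
      exact this
    intro i hin hij
    rcases lt_or_gt_of_ne hij with hlt | hgt
    · -- i < j
      have hsplit : walk ξ μ j ω = walk ξ μ i ω + ∑ l ∈ Finset.Ico i j, (ξ l ω + μ) := by
        rw [walk, walk, Finset.sum_range_add_sum_Ico _ (le_of_lt hlt)]
      have hij1 : i ≤ j - 1 := by omega
      have htop := Finset.sum_Ico_succ_top hij1 (fun l => ξ l ω + μ)
      rw [show j - 1 + 1 = j by omega] at htop
      have hbdd : ∑ l ∈ Finset.Ico i (j - 1), (ξ l ω + μ) ≤ ((j - 1 - i : ℕ) : ℝ) * (M + μ) := by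
        have := Finset.sum_le_card_nsmul (Finset.Ico i (j - 1)) (fun l => ξ l ω + μ) (M + μ)
          (fun l hl => by
            rw [Finset.mem_Ico] at hl
            have h := abs_le.mp (hsmall l hl.2)
            linarith [h.2])
        rwa [Nat.card_Ico, nsmul_eq_mul] at this
      have hcast : ((j - 1 - i : ℕ) : ℝ) ≤ J - 1 := by
        have h1 : ((j - 1 - i : ℕ) : ℝ) ≤ ((j - 1 : ℕ) : ℝ) := Nat.cast_le.mpr (by omega)
        rw [Nat.cast_sub hj1, Nat.cast_one] at h1
        exact h1
      have hMμ : (0:ℝ) ≤ M + μ := by linarith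
      have hmul := mul_le_mul_of_nonneg_right hcast hMμ
      linarith [hsplit, htop, hbdd, hbig, hmul, htdef]
    · -- j < i
      have hsplit : walk ξ μ i ω = walk ξ μ j ω + ∑ l ∈ Finset.Ico j i, (ξ l ω + μ) := by
        rw [walk, walk, Finset.sum_range_add_sum_Ico _ (le_of_lt hgt)]
      have hre : ∑ l ∈ Finset.Ico j i, (ξ l ω + μ) =
          ∑ l ∈ Finset.range (i - j), (ξ (j + l) ω + μ) := by
        rw [Finset.sum_Ico_eq_sum_range]
      have := hE' (i - j) (by omega) (by omega)
      rw [← hre] at this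
      linarith [hsplit, this]
  -- independence of the two blocks
  have hdisjST : Disjoint (Finset.range j) (Finset.Ico j n) := by
    rw [Finset.disjoint_left]
    intro a ha hb
    rw [Finset.mem_range] at ha
    rw [Finset.mem_Ico] at hb
    omega
  have hindepDE := hindep.indepFun_finset (Finset.range j) (Finset.Ico j n) hdisjST hmeas
  have hABox : MeasurableSet (Set.pi Set.univ fun i : (Finset.range j : Finset ℕ) => A (i : ℕ)) :=
    MeasurableSet.univ_pi fun i => hAm _
  have hDbox : D = (fun ω (i : (Finset.range j : Finset ℕ)) => ξ (i : ℕ) ω) ⁻¹'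
      (Set.pi Set.univ fun i => A (i : ℕ)) := by
    rw [hDdef]
    ext ω
    simp only [Set.mem_iInter, Set.mem_preimage, Set.mem_pi, Set.mem_univ, forall_true_left,
      Finset.mem_range]
    constructor
    · intro h i
      exact h i (Finset.mem_range.mp i.2)
    · intro h i hi
      exact h ⟨i, Finset.mem_range.mpr hi⟩
  set hmap : (↥(Finset.Ico j n) → ℝ) → (Fin r → ℝ) :=
    fun f l => f ⟨j + (l : ℕ), Finset.mem_Ico.mpr ⟨Nat.le_add_right _ _, by
      have h : (l : ℕ) < n - j := lt_of_lt_of_eq l.isLt hrdef; omega⟩⟩ with hmapdef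
  have hmapMeas : Measurable hmap := measurable_pi_lambda _ fun l => measurable_pi_apply _
  have hEbox : E = (fun ω (i : ↥(Finset.Ico j n)) => ξ (i : ℕ) ω) ⁻¹' (hmap ⁻¹' AT) := by
    rfl
  have hPDE : P (D ∩ E) = P D * P E := by
    rw [hDbox, hEbox]
    exact hindepDE.measure_inter_preimage_eq_mul _ _ hABox (hmapMeas hATm)
  -- computation of P D
  have hswap : ∀ i, P (ξ i ⁻¹' A i) = P (ξ 0 ⁻¹' A i) := fun i => by
    rw [← Measure.map_apply (hmeas i) (hAm i), hident i, Measure.map_apply (hmeas 0) (hAm i)]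
  have habs : P (ξ 0 ⁻¹' {x : ℝ | |x| ≤ M}) = ENNReal.ofReal (1 - 1 / (1 + M ^ γ)) :=
    prob_abs_le P ξ γ hmeas hγ htail hM0
  have hneg : P (ξ 0 ⁻¹' Set.Iio (-t)) = ENNReal.ofReal (1 / (2 * (1 + t ^ γ))) :=
    prob_lt_neg P ξ γ hmeas hsym hγ htail ht0
  have hPD : P D = ENNReal.ofReal (1 - 1 / (1 + M ^ γ)) ^ (j - 1) *
      ENNReal.ofReal (1 / (2 * (1 + t ^ γ))) := by
    rw [hDdef, hindep.measure_inter_preimage_eq_mul (Finset.range j) (fun i _ => hAm i)]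
    rw [Finset.prod_eq_prod_diff_singleton_mul
      (Finset.mem_range.mpr (by omega : j - 1 < j)) (fun i => P (ξ i ⁻¹' A i))]
    congr 1
    · have hconst : ∀ i ∈ Finset.range j \ {j - 1},
          P (ξ i ⁻¹' A i) = ENNReal.ofReal (1 - 1 / (1 + M ^ γ)) := by
        intro i hi
        rw [Finset.mem_sdiff, Finset.mem_singleton] at hi
        rw [hswap i, hAdef]
        simp only [if_neg hi.2]
        exact habs
      rw [Finset.prod_congr rfl hconst, Finset.prod_const]
      congr 1
      rw [Finset.card_sdiff_of_subset (by simp [Finset.singleton_subset_iff]; omega), Finset.card_range,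
        Finset.card_singleton]
    · rw [hswap (j - 1), hAdef]
      simp only [if_pos rfl]
      exact hneg
  -- P E is at least pstar
  have hPE : pstar ≤ (P E).toReal := by
    rw [hEdef, prob_tuple_shift P ξ hmeas hindep hident j r hATm, hpstar]
    refine ENNReal.toReal_mono (measure_ne_top _ _) (measure_mono fun ω hω => ?_)
    rw [Set.mem_setOf_eq] at hω
    rw [Set.mem_preimage, hATdef, Set.mem_iInter₂]
    intro m hm
    rw [Set.mem_Icc] at hm
    simp only [Set.mem_setOf_eq]
    have h1 : 0 < walk ξ μ m ω := hω m hm.1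
    rw [walk] at h1
    convert h1 using 1
    refine Finset.sum_congr rfl fun l hl => ?_
    rw [Finset.mem_range] at hl
    rw [dif_pos (by omega : l < r)]
  -- assemble
  have h1M : (0:ℝ) ≤ 1 - 1 / (1 + M ^ γ) := by
    rw [hMγ]
    have : 1 / (1 + J) ≤ 1 := by
      rw [div_le_one (by linarith)]
      linarith
    linarith
  have h2t : (0:ℝ) ≤ 1 / (2 * (1 + t ^ γ)) := by
    have := Real.rpow_nonneg ht0 γ
    positivity
  have hPDto : (P D).toReal = (1 - 1 / (1 + M ^ γ)) ^ (j - 1) * (1 / (2 * (1 + t ^ γ))) := by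
    rw [hPD, ENNReal.toReal_mul, ← ENNReal.ofReal_pow h1M, ENNReal.toReal_ofReal (by positivity),
      ENNReal.toReal_ofReal h2t]
  have hfrac : 1 - 1 / (1 + M ^ γ) = J / (1 + J) := by
    rw [hMγ]
    field_simp
    ring
  have hc2 : cTwo ≤ (J / (1 + J)) ^ (j - 1) := cTwo_le hj1
  have htlb : cOne γ μ / J ^ (γ + 1) ≤ 1 / (2 * (1 + t ^ γ)) := tail_lb hγ hμ hj1
  have hpos2 : (0:ℝ) ≤ cOne γ μ / J ^ (γ + 1) :=
    le_of_lt (div_pos (cOne_pos hμ) (Real.rpow_pos_of_pos hJ0 _))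
  have h5 : cTwo * (cOne γ μ / J ^ (γ + 1)) ≤ (P D).toReal := by
    rw [hPDto, hfrac]
    exact mul_le_mul hc2 htlb hpos2 (pow_nonneg (by positivity) _)
  have hps0 : (0:ℝ) ≤ pstar := hpstar ▸ ENNReal.toReal_nonneg
  have h6 : cTwo * (cOne γ μ / J ^ (γ + 1)) * pstar ≤ (P D).toReal * (P E).toReal :=
    mul_le_mul h5 hPE hps0 ENNReal.toReal_nonneg
  have hmono : (P (D ∩ E)).toReal ≤
      (P {ω | ∀ i, i ≤ n → i ≠ j → walk ξ μ j ω < walk ξ μ i ω}).toReal :=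
    ENNReal.toReal_mono (measure_ne_top _ _) (measure_mono hsub)
  have hDEto : (P (D ∩ E)).toReal = (P D).toReal * (P E).toReal := by
    rw [hPDE, ENNReal.toReal_mul]
  calc cOne γ μ * cTwo * pstar / J ^ (γ + 1)
      = cTwo * (cOne γ μ / J ^ (γ + 1)) * pstar := by ring
    _ ≤ (P D).toReal * (P E).toReal := h6
    _ = (P (D ∩ E)).toReal := hDEto.symm
    _ ≤ _ := hmono
end ProbHelpers

end Helpers

/-- Finite-sample heavy-tailed lower bound for the minimizer of the `n`-step positively
drifted random walk: for `k₀ ≤ k ≤ n − 1`,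
`Σ_{j=k+1}^n P(B_j) ≥ (c₁c₂p*/γ)((k+1)^{−γ} − (n+1)^{−γ})`, where `B_j` is the event that
the `n`-step walk attains its strict minimum at `j`. -/
theorem stmt15 {Ω : Type*} [MeasurableSpace Ω] (P : Measure Ω) [IsProbabilityMeasure P]
    (ξ : ℕ → Ω → ℝ) (hmeas : ∀ i, Measurable (ξ i))
    (hindep : iIndepFun ξ P)
    (hident : ∀ i, P.map (ξ i) = P.map (ξ 0))
    (hsym : P.map (ξ 0) = P.map (fun ω => -ξ 0 ω))
    (γ : ℝ) (hγ : 1 < γ)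
    (htail : ∀ t : ℝ, 0 ≤ t → P {ω | t < |ξ 0 ω|} = ENNReal.ofReal (1 / (1 + t ^ γ)))
    (μ : ℝ) (hμ : 0 < μ)
    (pstar : ℝ) (hpstar : pstar = (P {ω | ∀ i : ℕ, 1 ≤ i → 0 < walk ξ μ i ω}).toReal)
    (n k : ℕ) (hk0 : kZero γ μ ≤ (k : ℤ)) (hkn : k + 1 ≤ n) :
    cOne γ μ * cTwo * pstar / γ * (((k : ℝ) + 1) ^ (-γ) - ((n : ℝ) + 1) ^ (-γ)) ≤
      ∑ j ∈ Finset.Icc (k + 1) n,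
        (P {ω | ∀ i, i ≤ n → i ≠ j → walk ξ μ j ω < walk ξ μ i ω}).toReal := by
  have hγ0 : (0:ℝ) < γ := by linarith
  set C : ℝ := cOne γ μ * cTwo * pstar with hCdef
  have hps0 : (0:ℝ) ≤ pstar := hpstar ▸ ENNReal.toReal_nonneg
  have hC0 : 0 ≤ C := by
    rw [hCdef]
    have := cOne_pos (γ := γ) hμ
    have := cTwo_nonneg
    positivity
  have hstep : ∀ j ∈ Finset.Icc (k + 1) n,
      C / γ * ((j:ℝ) ^ (-γ) - ((j:ℝ) + 1) ^ (-γ)) ≤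
        (P {ω | ∀ i, i ≤ n → i ≠ j → walk ξ μ j ω < walk ξ μ i ω}).toReal := by
    intro j hj
    rw [Finset.mem_Icc] at hj
    have hj1 : 1 ≤ j := by omega
    have hJ1 : (1:ℝ) ≤ (j:ℝ) := by exact_mod_cast hj1
    have h1 := step_ineq hγ hJ1
    have h2 : C / γ * ((j:ℝ) ^ (-γ) - ((j:ℝ) + 1) ^ (-γ)) ≤ C / γ * (γ / (j:ℝ) ^ (γ + 1)) :=
      mul_le_mul_of_nonneg_left h1 (by positivity)
    have h3 : C / γ * (γ / (j:ℝ) ^ (γ + 1)) = C / (j:ℝ) ^ (γ + 1) := by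
      field_simp
    have h4 := perj P ξ γ hmeas hindep hident hsym hγ htail hμ hpstar hj1 hj.2
    rw [h3] at h2
    exact h2.trans h4
  have hsum := Finset.sum_le_sum hstep
  refine le_trans (le_of_eq ?_) hsum
  rw [← Finset.mul_sum]
  have htel : ∑ j ∈ Finset.Icc (k + 1) n, ((j:ℝ) ^ (-γ) - ((j:ℝ) + 1) ^ (-γ)) =
      ((k:ℝ) + 1) ^ (-γ) - ((n:ℝ) + 1) ^ (-γ) := by
    have hIcc : Finset.Icc (k + 1) n = Finset.Ico (k + 1) (n + 1) := by
      rw [Finset.Ico_add_one_right_eq_Icc]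
    rw [hIcc, Finset.sum_Ico_eq_sum_range]
    have hre : ∀ i, ((k + 1 + i : ℕ) : ℝ) ^ (-γ) - (((k + 1 + i : ℕ) : ℝ) + 1) ^ (-γ) =
        (fun m => ((k + 1 + m : ℕ) : ℝ) ^ (-γ)) i - (fun m => ((k + 1 + m : ℕ) : ℝ) ^ (-γ)) (i + 1) := by
      intro i
      dsimp only
      congr 2
      push_cast
      ring
    rw [Finset.sum_congr rfl fun i _ => hre i, Finset.sum_range_sub']
    have hnk : n + 1 - (k + 1) = n - k := by omega
    rw [hnk, show k + 1 + 0 = k + 1 from rfl, show k + 1 + (n - k) = n + 1 by omega]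
    push_cast
    ring_nf
  rw [htel]
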